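/- arXiv:2312.16560 — 2 statements merged into one kernel-verified Lean document; each statement's English description precedes it below -/
import Mathlib

section
/- Let g = (V, E) be a directed graph with node features x_v ∈ ℝ^d, and consider the aggregation scheme h_v⁰ = x_v and h_v^ℓ = Σ_{u ∈ N_v} F(u, ℓ) ⊙ h_u^{ℓ-1} for ℓ ≥ 1, where F(u, ℓ) ∈ (0,1)^d and ⊙ is the element-wise product. Suppose there is a walk ((v, v_2), ..., (v_K, u)) of length K ≥ 1 from node v to node u. Then for every ε > 0 there exists a choice of the filters F such that ‖h_u^K - x_v‖₁ ≤ d·ε. -/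
/-- The filtered aggregation scheme: `h_v⁰ = x_v` and
`h_v^ℓ = ∑_{u ∈ N_v} F(u, ℓ) ⊙ h_u^{ℓ-1}`. -/
def amph {V : Type*} {d : ℕ} (N : V → Finset V) (x : V → Fin d → ℝ)
    (F : V → ℕ → Fin d → ℝ) : ℕ → V → Fin d → ℝ
  | 0, v => x v
  | ℓ + 1, v => fun i => ∑ u ∈ N v, F u (ℓ + 1) i * amph N x F ℓ u i

/-!
Let the filters pass the signal with weight `1 - δ` at the node the walk visits before step `ℓ`
and with weight `δ` everywhere else. At `δ = 0` only the walk survives, so `h_u^K = x_v` exactly.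
Each coordinate of `h_u^K` is a polynomial in the filter entries, hence continuous in `δ`, so a
small enough `δ ∈ (0,1)` makes every coordinate `ε`-close to `x_v`.
-/

open Filter Topology Set

namespace Amph

variable {V : Type*} {d : ℕ}

theorem continuous_amph (N : V → Finset V) (x : V → Fin d → ℝ) (ℓ : ℕ) (a : V) (i : Fin d) :
    Continuous fun F : V → ℕ → Fin d → ℝ => amph N x F ℓ a i := by
  induction ℓ generalizing a with
  | zero => exact continuous_const
  | succ ℓ ih =>
    refine continuous_finsetSum _ fun b _ => Continuous.mul ?_ (ih b)
    fun_prop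

open Classical in
noncomputable def walkFilter (w : ℕ → V) (δ : ℝ) : V → ℕ → Fin d → ℝ :=
  fun a ℓ _ => if a = w (ℓ - 1) then 1 - δ else δ

theorem continuous_walkFilter (w : ℕ → V) : Continuous (walkFilter (d := d) w) :=
  continuous_pi fun a => continuous_pi fun ℓ => continuous_pi fun _ => by
    unfold walkFilter
    split_ifs <;> fun_prop

theorem walkFilter_mem_Ioo (w : ℕ → V) {δ : ℝ} (hδ : δ ∈ Ioo 0 1) (a : V) (ℓ : ℕ) (i : Fin d) :
    walkFilter w δ a ℓ i ∈ Ioo 0 1 := by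
  unfold walkFilter
  split_ifs
  · exact ⟨by linarith [hδ.2], by linarith [hδ.1]⟩
  · exact hδ

theorem amph_walkFilter_zero (N : V → Finset V) (x : V → Fin d → ℝ) (w : ℕ → V) (ℓ : ℕ)
    (hwalk : ∀ k < ℓ, w k ∈ N (w (k + 1))) :
    amph N x (walkFilter w 0) ℓ (w ℓ) = x (w 0) := by
  induction ℓ with
  | zero => rfl
  | succ ℓ ih =>
    classical
    funext i
    have hmem : w ℓ ∈ N (w (ℓ + 1)) := hwalk ℓ ℓ.lt_succ_self
    simp only [amph, walkFilter, Nat.add_sub_cancel, sub_zero, ite_mul, one_mul, zero_mul]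
    rw [Finset.sum_ite_eq' _ (w ℓ), if_pos hmem, ih fun k hk => hwalk k (hk.trans ℓ.lt_succ_self)]

end Amph

open Amph in
theorem amp_reachability_general {V : Type*} {d : ℕ} (N : V → Finset V) (x : V → Fin d → ℝ)
    (v u : V) (K : ℕ) (w : ℕ → V) (hw0 : w 0 = v) (hwK : w K = u)
    (hwalk : ∀ k < K, w k ∈ N (w (k + 1)))
    (ε : ℝ) (hε : 0 < ε) :
    ∃ F : V → ℕ → Fin d → ℝ,
      (∀ a ℓ i, F a ℓ i ∈ Set.Ioo (0 : ℝ) 1) ∧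
      ∑ i, |amph N x F K u i - x v i| ≤ d * ε := by
  subst hw0 hwK
  have hlim : ∀ i, Tendsto (fun δ => amph N x (walkFilter w δ) K (w K) i) (𝓝[>] 0)
      (𝓝 (x (w 0) i)) := by
    intro i
    have hcont : Tendsto (fun δ => amph N x (walkFilter w δ) K (w K) i) (𝓝 0)
        (𝓝 (amph N x (walkFilter w 0) K (w K) i)) :=
      ((continuous_amph N x K (w K) i).comp (continuous_walkFilter w)).tendsto 0
    rw [amph_walkFilter_zero N x w K hwalk] at hcont
    exact hcont.mono_left nhdsWithin_le_nhds
  have hclose : ∀ᶠ δ in 𝓝[>] 0, ∀ i, |amph N x (walkFilter w δ) K (w K) i - x (w 0) i| < ε :=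
    eventually_all.2 fun i => Metric.tendsto_nhds.1 (hlim i) ε hε
  obtain ⟨δ, hδε, hδ⟩ := (hclose.and (Ioo_mem_nhdsGT one_pos)).exists
  refine ⟨walkFilter w δ, walkFilter_mem_Ioo w hδ, ?_⟩
  calc ∑ i, |amph N x (walkFilter w δ) K (w K) i - x (w 0) i| ≤ ∑ _i : Fin d, ε :=
        Finset.sum_le_sum fun i _ => (hδε i).le
    _ = d * ε := by simp

/-- Reachability: if there is a walk of length `K ≥ 1` from `v` to `u`, then for every
`ε > 0` there is a choice of filters in `(0,1)^d` such that `‖h_u^K - x_v‖₁ ≤ d ε`. -/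
theorem amp_reachability {V : Type*} {d : ℕ} (N : V → Finset V) (x : V → Fin d → ℝ)
    (v u : V) (K : ℕ) (hK : 1 ≤ K) (w : ℕ → V) (hw0 : w 0 = v) (hwK : w K = u)
    (hwalk : ∀ k < K, w k ∈ N (w (k + 1)))
    (ε : ℝ) (hε : 0 < ε) :
    ∃ F : V → ℕ → Fin d → ℝ,
      (∀ a ℓ i, F a ℓ i ∈ Set.Ioo (0 : ℝ) 1) ∧
      ∑ i, |amph N x F K u i - x v i| ≤ d * ε :=
  amp_reachability_general N x v u K w hw0 hwK hwalk ε hε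
end

section
/- One-layer sensitivity bound for filtered message passing: let h_v¹ = up(rs(h_v⁰) + mp(Σ_u A_{vu} F(h_u⁰) ⊙ h_u⁰)) where up, rs, mp : ℝ^d → ℝ^d are differentiable with Jacobians whose entry-wise absolute row sums are bounded by c_up, c_rs, c_mp respectively, the Jacobian of F : ℝ^d → [0,1]^d has entry-wise L¹ norm at most c_F, |h_u⁰[q]| ≤ k_h for all u, q, and |F(h)[q]| ≤ k_F for all q. Then for every coordinate pair (α, β), |∂h_v^{1,α}/∂h_u^{0,β}| ≤ c_up·(c_rs·I + c_mp·(c_F·k_h + k_F)·A)_{vu}, where A is the adjacency matrix and I the identity. -/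
/-- One layer of filtered message passing:
`h_v¹ = up (rs (h_v⁰) + mp (∑_u A_{vu} F(h_u⁰) ⊙ h_u⁰))`. -/
def ampLayer {V : Type*} [Fintype V] {d : ℕ}
    (up rs mp : (Fin d → ℝ) → (Fin d → ℝ)) (F : (Fin d → ℝ) → (Fin d → ℝ))
    (A : Matrix V V ℝ) (h : V → Fin d → ℝ) (v : V) : Fin d → ℝ :=
  up (rs (h v) + mp (fun q => ∑ u, A v u * (F (h u) q * h u q)))

/-!
Differentiate the layer by the chain rule: a perturbation of `h_u⁰` in direction `e_β` reaches
`h_v¹` through the residual branch only when `v = u`, and through the message branch with weight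
`A_{vu}`, where the product rule bounds the derivative of `F(h_u⁰) ⊙ h_u⁰` entrywise by
`c_F k_h + k_F`. A linear map whose matrix has absolute row sums at most `c` multiplies the sup
norm by at most `c`, which accounts for the factors `c_rs`, `c_mp` and `c_up`.
-/

open ContinuousLinearMap

theorem abs_apply_le_of_sum_abs_le {ι κ : Type*} [Fintype ι] [DecidableEq ι] [Nonempty ι]
    (L : (ι → ℝ) →L[ℝ] (κ → ℝ)) {c m : ℝ} {p : κ} (hL : ∑ q, |L (Pi.single q 1) p| ≤ c)
    {ξ : ι → ℝ} (hξ : ∀ q, |ξ q| ≤ m) : |L ξ p| ≤ c * m := by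
  obtain ⟨q₀⟩ := ‹Nonempty ι›
  have hm : 0 ≤ m := (abs_nonneg _).trans (hξ q₀)
  have hexpand : L ξ p = ∑ q, ξ q * L (Pi.single q 1) p := by
    conv_lhs => rw [pi_eq_sum_univ' ξ]
    simp [map_sum, map_smul, Finset.sum_apply]
  calc |L ξ p| ≤ ∑ q, |ξ q| * |L (Pi.single q 1) p| := by
        simpa only [hexpand, abs_mul] using
          Finset.abs_sum_le_sum_abs (fun q => ξ q * L (Pi.single q 1) p) Finset.univ
    _ ≤ ∑ q, m * |L (Pi.single q 1) p| := by gcongr with q; exact hξ q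
    _ = m * ∑ q, |L (Pi.single q 1) p| := Finset.mul_sum _ _ _ |>.symm
    _ ≤ m * c := by gcongr
    _ = c * m := mul_comm m c

theorem abs_pi_single_one_apply_le {ι : Type*} [DecidableEq ι] (i j : ι) :
    |(Pi.single i 1 : ι → ℝ) j| ≤ 1 := by
  rw [Pi.single_apply]
  split_ifs <;> simp

theorem abs_pi_single_pi_single_one_apply_le {V ι : Type*} [DecidableEq V] [DecidableEq ι]
    (u v : V) (β q : ι) :
    |(Pi.single u (Pi.single β 1) : V → ι → ℝ) v q| ≤ (1 : Matrix V V ℝ) v u := by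
  rw [Pi.single_apply, Matrix.one_apply]
  split_ifs
  · exact abs_pi_single_one_apply_le β q
  · simp

def filteredMessage {V ι : Type*} [Fintype V] (F : (ι → ℝ) → ι → ℝ) (A : Matrix V V ℝ)
    (h : V → ι → ℝ) (v : V) : ι → ℝ :=
  fun q => ∑ u, A v u * (F (h u) q * h u q)

section FilteredMessage

variable {V ι : Type*} [Fintype V] [Fintype ι] {F : (ι → ℝ) → ι → ℝ} (A : Matrix V V ℝ)
  (v : V)

theorem differentiable_filteredMessage (hF : Differentiable ℝ F) :
    Differentiable ℝ (filteredMessage F A · v) := by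
  unfold filteredMessage
  fun_prop

theorem fderiv_filteredMessage_apply (hF : Differentiable ℝ F) (h₀ δ : V → ι → ℝ) (q : ι) :
    fderiv ℝ (filteredMessage F A · v) h₀ δ q =
      ∑ w, A v w * (fderiv ℝ F (h₀ w) (δ w) q * h₀ w q + F (h₀ w) q * δ w q) := by
  unfold filteredMessage
  rw [fderiv_pi (fun q => by fun_prop), pi_apply, fderiv_fun_sum (fun w _ => by fun_prop)]
  simp only [FunLike.coe_sum, Finset.sum_apply]
  refine Finset.sum_congr rfl fun w _ => ?_
  have hentry : fderiv ℝ (fun h : V → ι → ℝ => h w q) h₀ δ = δ w q := by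
    rw [fderiv_apply (by fun_prop) q, fderiv_apply (by fun_prop) w, fderiv_fun_id]
    rfl
  have hFentry : fderiv ℝ (fun h : V → ι → ℝ => F (h w) q) h₀ δ = fderiv ℝ F (h₀ w) (δ w) q := by
    rw [fderiv_apply (by fun_prop) q, fderiv_fun_comp h₀ (f := fun h : V → ι → ℝ => h w)
      (hF (h₀ w)) (by fun_prop), fderiv_apply (by fun_prop) w, fderiv_fun_id]
    rfl
  rw [fderiv_const_mul (by fun_prop), fderiv_fun_mul (by fun_prop) (by fun_prop)]
  simp only [smul_apply, add_apply, smul_eq_mul, hentry, hFentry]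
  ring

theorem abs_fderiv_filteredMessage_single_le [DecidableEq V] [DecidableEq ι]
    (hF : Differentiable ℝ F) {h₀ : V → ι → ℝ} {u : V} {β : ι} {cF kh kF : ℝ}
    (hA : 0 ≤ A v u) (hDF : ∀ q, |fderiv ℝ F (h₀ u) (Pi.single β 1) q| ≤ cF)
    (hFu : ∀ q, |F (h₀ u) q| ≤ kF) (hh : ∀ q, |h₀ u q| ≤ kh) (q : ι) :
    |fderiv ℝ (filteredMessage F A · v) h₀ (Pi.single u (Pi.single β 1)) q| ≤
      A v u * (cF * kh + kF) := by
  rw [fderiv_filteredMessage_apply A v hF, Finset.sum_eq_single u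
    (fun w _ hw => by simp [Pi.single_eq_of_ne hw]) (fun hu => absurd (Finset.mem_univ u) hu)]
  simp only [Pi.single_eq_same, abs_mul, abs_of_nonneg hA]
  gcongr
  refine (abs_add_le _ _).trans ?_
  rw [abs_mul, abs_mul]
  exact add_le_add
    (mul_le_mul (hDF q) (hh q) (abs_nonneg _) ((abs_nonneg _).trans (hDF q)))
    ((mul_le_of_le_one_right (abs_nonneg _) (abs_pi_single_one_apply_le β q)).trans (hFu q))

end FilteredMessage

theorem fderiv_ampLayer_apply {V : Type*} [Fintype V] {d : ℕ}
    {up rs mp F : (Fin d → ℝ) → (Fin d → ℝ)} (A : Matrix V V ℝ)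
    (hup : Differentiable ℝ up) (hrs : Differentiable ℝ rs) (hmp : Differentiable ℝ mp)
    (hF : Differentiable ℝ F) (h₀ δ : V → Fin d → ℝ) (v : V) (α : Fin d) :
    fderiv ℝ (fun h => ampLayer up rs mp F A h v α) h₀ δ =
      fderiv ℝ up (rs (h₀ v) + mp (filteredMessage F A h₀ v))
        (fderiv ℝ rs (h₀ v) (δ v) +
          fderiv ℝ mp (filteredMessage F A h₀ v) (fderiv ℝ (filteredMessage F A · v) h₀ δ)) α := by
  have hmsg := (differentiable_filteredMessage A v hF h₀).hasFDerivAt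
  have hlayer : HasFDerivAt (fun h => ampLayer up rs mp F A h v) _ h₀ :=
    (hup _).hasFDerivAt.comp h₀ (((hrs _).hasFDerivAt.comp h₀ (hasFDerivAt_apply v h₀)).add
      ((hmp _).hasFDerivAt.comp h₀ hmsg))
  rw [fderiv_apply hlayer.differentiableAt α, hlayer.fderiv]
  rfl

/-- One-layer sensitivity bound for filtered message passing. -/
theorem one_layer_sensitivity_bound {V : Type*} [Fintype V] [DecidableEq V] {d : ℕ}
    (up rs mp : (Fin d → ℝ) → (Fin d → ℝ)) (F : (Fin d → ℝ) → (Fin d → ℝ))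
    (A : Matrix V V ℝ) (hA : ∀ v u, 0 ≤ A v u)
    (cup crs cmp cF kh kF : ℝ)
    (hupDiff : Differentiable ℝ up) (hrsDiff : Differentiable ℝ rs)
    (hmpDiff : Differentiable ℝ mp) (hFDiff : Differentiable ℝ F)
    (hup : ∀ (y : Fin d → ℝ) (p : Fin d), ∑ q, |fderiv ℝ up y (Pi.single q 1) p| ≤ cup)
    (hrs : ∀ (y : Fin d → ℝ) (p : Fin d), ∑ q, |fderiv ℝ rs y (Pi.single q 1) p| ≤ crs)
    (hmp : ∀ (y : Fin d → ℝ) (p : Fin d), ∑ q, |fderiv ℝ mp y (Pi.single q 1) p| ≤ cmp)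
    (hF : ∀ y : Fin d → ℝ, ∑ p, ∑ q, |fderiv ℝ F y (Pi.single q 1) p| ≤ cF)
    (hFrange : ∀ (y : Fin d → ℝ) (q : Fin d), |F y q| ≤ kF)
    (h0 : V → Fin d → ℝ) (hkh : ∀ (u : V) (q : Fin d), |h0 u q| ≤ kh)
    (v u : V) (α β : Fin d) :
    |fderiv ℝ (fun h : V → Fin d → ℝ => ampLayer up rs mp F A h v α) h0
        (Pi.single u (Pi.single β 1))| ≤
      cup * ((crs • (1 : Matrix V V ℝ) + (cmp * (cF * kh + kF)) • A) v u) := by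
  have : Nonempty (Fin d) := ⟨α⟩
  have hDF (q : Fin d) : |fderiv ℝ F (h0 u) (Pi.single β 1) q| ≤ cF :=
    calc _ ≤ ∑ q', |fderiv ℝ F (h0 u) (Pi.single q' 1) q| :=
          Finset.single_le_sum (fun _ _ => abs_nonneg _) (Finset.mem_univ β)
      _ ≤ ∑ p, ∑ q', |fderiv ℝ F (h0 u) (Pi.single q' 1) p| :=
          Finset.single_le_sum (f := fun p => ∑ q', |fderiv ℝ F (h0 u) (Pi.single q' 1) p|)
            (fun _ _ => Finset.sum_nonneg fun _ _ => abs_nonneg _) (Finset.mem_univ q)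
      _ ≤ cF := hF _
  have hmsg := abs_fderiv_filteredMessage_single_le A v hFDiff (hA v u) hDF (hFrange _)
    (hkh u)
  rw [fderiv_ampLayer_apply A hupDiff hrsDiff hmpDiff hFDiff]
  calc _ ≤ cup * (crs * (1 : Matrix V V ℝ) v u + cmp * (A v u * (cF * kh + kF))) :=
        abs_apply_le_of_sum_abs_le _ (hup _ α) fun p => (abs_add_le _ _).trans <| add_le_add
          (abs_apply_le_of_sum_abs_le _ (hrs _ p) (abs_pi_single_pi_single_one_apply_le u v β))
          (abs_apply_le_of_sum_abs_le _ (hmp _ p) hmsg)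
    _ = _ := by
        simp only [Matrix.add_apply, Matrix.smul_apply, smul_eq_mul]
        ring
end
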